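/- arXiv:1709.02933 — 2 statements merged into one kernel-verified Lean document; each statement's English description precedes it below -/
import Mathlib

section
/- Let π be the plane in ℝ³ with equation v₁ξ + v₂η + v₃t = c, where (v₁, v₂, v₃) ≠ 0. The line h_{p,q} is contained in π if and only if p lies on the line {x ∈ ℝ² : v₁x₁ + v₂x₂ = v₃} and q lies on the line {x ∈ ℝ² : v₁x₁ + v₂x₂ = c} (interpreting these conditions; in particular if (v₁,v₂) ≠ 0 these are two parallel lines in ℝ²). -/
/-!
`h_{p,q}` is the line `t ↦ (q - t p, t)`. Along it the plane equation reads
`v₁q₁ + v₂q₂ + t (v₃ - v₁p₁ - v₂p₂) = c`, an affine function of `t`, which is constantly `c`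
exactly when its value at `t = 0` is `c` and its slope vanishes.
-/

/-- The set of homotheties `(ξ, η, t)`, acting as `x ↦ t • x + (ξ, η)`, that map `p` to `q`. -/
def homLine (p q : ℝ × ℝ) : Set (ℝ × ℝ × ℝ) :=
  {w | w.2.2 • p + (w.1, w.2.1) = q}

theorem mem_homLine_iff {p q : ℝ × ℝ} {w : ℝ × ℝ × ℝ} :
    w ∈ homLine p q ↔ w.1 = q.1 - w.2.2 * p.1 ∧ w.2.1 = q.2 - w.2.2 * p.2 := by
  simp only [homLine, Set.mem_ofPred_eq, Prod.ext_iff, Prod.smul_fst, Prod.smul_snd,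
    Prod.fst_add, Prod.snd_add, smul_eq_mul]
  constructor <;> rintro ⟨h₁, h₂⟩ <;> constructor <;> linarith

theorem mk_mem_homLine (p q : ℝ × ℝ) (t : ℝ) :
    (q.1 - t * p.1, q.2 - t * p.2, t) ∈ homLine p q :=
  mem_homLine_iff.2 ⟨rfl, rfl⟩

theorem stmt_3_general (v₁ v₂ v₃ c : ℝ) (p q : ℝ × ℝ) :
    homLine p q ⊆ {w : ℝ × ℝ × ℝ | v₁ * w.1 + v₂ * w.2.1 + v₃ * w.2.2 = c} ↔
      (v₁ * p.1 + v₂ * p.2 = v₃ ∧ v₁ * q.1 + v₂ * q.2 = c) := by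
  constructor
  · intro h
    have at_zero : v₁ * (q.1 - 0 * p.1) + v₂ * (q.2 - 0 * p.2) + v₃ * 0 = c :=
      h (mk_mem_homLine p q 0)
    have at_one : v₁ * (q.1 - 1 * p.1) + v₂ * (q.2 - 1 * p.2) + v₃ * 1 = c :=
      h (mk_mem_homLine p q 1)
    exact ⟨by linear_combination at_zero - at_one, by linear_combination at_zero⟩
  · rintro ⟨hp, hq⟩ w hw
    obtain ⟨h₁, h₂⟩ := mem_homLine_iff.1 hw
    show v₁ * w.1 + v₂ * w.2.1 + v₃ * w.2.2 = c
    rw [h₁, h₂]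
    linear_combination hq - w.2.2 * hp

/-- `h_{p,q}` is contained in the plane `v₁ξ + v₂η + v₃t = c` iff `p` lies on the line
`v₁x₁ + v₂x₂ = v₃` and `q` lies on the line `v₁x₁ + v₂x₂ = c`. -/
theorem stmt_3 (v₁ v₂ v₃ c : ℝ) (hv : (v₁, v₂, v₃) ≠ (0, 0, 0)) (p q : ℝ × ℝ) :
    homLine p q ⊆ {w : ℝ × ℝ × ℝ | v₁ * w.1 + v₂ * w.2.1 + v₃ * w.2.2 = c} ↔
      (v₁ * p.1 + v₂ * p.2 = v₃ ∧ v₁ * q.1 + v₂ * q.2 = c) :=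
  stmt_3_general v₁ v₂ v₃ c p q
end

section
/- Let S be a finite set of points in ℝ³ such that no plane of ℝ³ contains more than μ points of S. Then any hyperplane in ℝ⁴ contains at most μ² of the lines h_{p,q} with p, q ∈ S. -/
/-!
The line `h_{p,q}` is `{(q - t • p, t) : t ∈ ℝ}`, so it lies in the hyperplane
`⟪v, ξ⟫ + u t = c` exactly when `⟪v, q⟫ + (u - ⟪v, p⟫) t = c` identically in `t`, i.e. when
`⟪v, p⟫ = u` and `⟪v, q⟫ = c`. The lines in the hyperplane are therefore indexed by pairs from
`S ∩ {⟪v, ·⟫ = u}` and `S ∩ {⟪v, ·⟫ = c}`; for `v ≠ 0` these are planes, with at most `μ` points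
of `S` each, and for `v = 0` the first one is empty because `u ≠ 0`.
-/

/-- The set of homotheties `(ξ, t)` of ℝ³, acting as `x ↦ t • x + ξ`, mapping `p` to `q`. -/
def homLine3 (p q : Fin 3 → ℝ) : Set ((Fin 3 → ℝ) × ℝ) :=
  {w | w.2 • p + w.1 = q}

open Finset

theorem forall_add_mul_eq_iff {R : Type*} [Ring R] {a b c : R} :
    (∀ t : R, a + b * t = c) ↔ a = c ∧ b = 0 := by
  refine ⟨fun h => ?_, fun ⟨ha, hb⟩ t => by simp [ha, hb]⟩
  have h0 : a = c := by simpa using h 0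
  have h1 : a + b = c := by simpa using h 1
  exact ⟨h0, by rwa [h0, add_eq_left] at h1⟩

theorem homLine3_eq_range (p q : Fin 3 → ℝ) :
    homLine3 p q = Set.range fun t : ℝ => (q - t • p, t) := by
  ext ⟨ξ, t⟩
  simp only [homLine3, Set.mem_ofPred_eq, Set.mem_range, Prod.mk.injEq]
  constructor
  · rintro rfl
    exact ⟨t, by abel, rfl⟩
  · rintro ⟨t, rfl, rfl⟩
    abel

theorem homLine3_subset_iff (p q v : Fin 3 → ℝ) (u c : ℝ) :
    homLine3 p q ⊆ {w | v ⬝ᵥ w.1 + u * w.2 = c} ↔ v ⬝ᵥ p = u ∧ v ⬝ᵥ q = c := by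
  have hline : ∀ t : ℝ, v ⬝ᵥ (q - t • p) + u * t = v ⬝ᵥ q + (u - v ⬝ᵥ p) * t := by
    intro t
    rw [dotProduct_sub, dotProduct_smul, smul_eq_mul]
    ring
  rw [homLine3_eq_range, Set.range_subset_iff]
  simp only [Set.mem_ofPred_eq, hline, forall_add_mul_eq_iff, sub_eq_zero]
  exact and_comm.trans (and_congr_left' eq_comm)

theorem ncard_homLine3_subset_hyperplane (S : Finset (Fin 3 → ℝ)) (v : Fin 3 → ℝ) (u c : ℝ) :
    Set.ncard {pq : (Fin 3 → ℝ) × (Fin 3 → ℝ) | pq.1 ∈ S ∧ pq.2 ∈ S ∧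
        homLine3 pq.1 pq.2 ⊆ {w | v ⬝ᵥ w.1 + u * w.2 = c}} =
      #(S.filter (v ⬝ᵥ · = u)) * #(S.filter (v ⬝ᵥ · = c)) := by
  rw [← card_product, ← Set.ncard_coe_finset]
  congr 1
  ext ⟨p, q⟩
  simp only [homLine3_subset_iff, Set.mem_ofPred_eq, coe_product, Set.mem_prod, coe_filter]
  tauto

/-- If no plane of ℝ³ contains more than `μ` points of `S`, then any hyperplane in ℝ⁴ contains
at most `μ²` of the lines `h_{p,q}` with `p, q ∈ S`. -/
theorem stmt_17 (S : Finset (Fin 3 → ℝ)) (μ : ℕ)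
    (hμ : ∀ (w : Fin 3 → ℝ) (c : ℝ), w ≠ 0 →
      (S.filter (fun x => (∑ i, w i * x i) = c)).card ≤ μ)
    (v : Fin 3 → ℝ) (u c : ℝ) (hvu : (v, u) ≠ 0) :
    Set.ncard {pq : (Fin 3 → ℝ) × (Fin 3 → ℝ) | pq.1 ∈ S ∧ pq.2 ∈ S ∧
        homLine3 pq.1 pq.2 ⊆ {w : (Fin 3 → ℝ) × ℝ | (∑ i, v i * w.1 i) + u * w.2 = c}} ≤
      μ ^ 2 := by
  refine (ncard_homLine3_subset_hyperplane S v u c).trans_le ?_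
  by_cases hv : v = 0
  · have hu : u ≠ 0 := fun hu => hvu (by simp [hv, hu])
    have hempty : S.filter (v ⬝ᵥ · = u) = ∅ :=
      filter_false_of_mem fun x _ => by rw [hv, zero_dotProduct]; exact hu.symm
    simp [hempty]
  · rw [sq]
    exact Nat.mul_le_mul (hμ v u hv) (hμ v c hv)
end
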